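/- arXiv:2310.18304 — 5 statements merged into one kernel-verified Lean document; each statement's English description precedes it below -/
import Mathlib

section
/- If f₁,…,f_m : Ω → ℝ are lower bounded and each f_j is (ε,δ)-close to g, and w₁,…,w_m ∈ [0,1] are weights summing to 1, then the convex combination ∑ⱼ wⱼ fⱼ and g are (ε, (e^ε+1)δ)-close. -/
def IsClose {Ω : Type*} (f g : Ω → ℝ) (ε δ : ℝ) : Prop :=
  ∀ θ : Ω, g θ - (⨅ θ' : Ω, g θ') ≤ Real.exp ε * ((f θ - ⨅ θ' : Ω, f θ') + δ) ∧
    f θ - (⨅ θ' : Ω, f θ') ≤ Real.exp ε * ((g θ - ⨅ θ' : Ω, g θ') + δ)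

lemma isClose_aux {Ω : Type*} [Nonempty Ω] (F g : Ω → ℝ) (ε δ S : ℝ) (hδ : 0 ≤ δ)
    (hgb : BddBelow (Set.range g))
    (hFS : ∀ θ, S ≤ F θ)
    (h1 : ∀ θ, g θ - (⨅ θ' : Ω, g θ') ≤ Real.exp ε * (F θ - S + δ))
    (h2 : ∀ θ, F θ - S ≤ Real.exp ε * (g θ - (⨅ θ' : Ω, g θ') + δ)) :
    IsClose F g ε ((Real.exp ε + 1) * δ) := by
  have hexp : (0:ℝ) < Real.exp ε := Real.exp_pos ε
  have hFbdd : BddBelow (Set.range F) := ⟨S, by rintro x ⟨θ, rfl⟩; exact hFS θ⟩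
  have hIF1 : S ≤ ⨅ θ, F θ := le_ciInf hFS
  have hIF2 : (⨅ θ, F θ) ≤ S + Real.exp ε * δ := by
    apply le_of_forall_pos_le_add
    intro η hη
    have hpos : 0 < η / Real.exp ε := div_pos hη hexp
    obtain ⟨θ, hθ⟩ := exists_lt_of_ciInf_lt
      (show (⨅ θ' : Ω, g θ') < (⨅ θ' : Ω, g θ') + η / Real.exp ε by linarith)
    have hle : (⨅ θ', F θ') ≤ F θ := ciInf_le hFbdd θ
    have h2' := h2 θ
    have key : Real.exp ε * (g θ - (⨅ θ' : Ω, g θ')) < η := by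
      have : g θ - (⨅ θ' : Ω, g θ') < η / Real.exp ε := by linarith
      calc Real.exp ε * (g θ - (⨅ θ' : Ω, g θ')) < Real.exp ε * (η / Real.exp ε) :=
            mul_lt_mul_of_pos_left this hexp
        _ = η := by field_simp
    nlinarith
  intro θ
  constructor
  · have := h1 θ
    have hle : (⨅ θ', F θ') ≤ F θ := ciInf_le hFbdd θ
    nlinarith
  · have := h2 θ
    have hG : (⨅ θ' : Ω, g θ') ≤ g θ := ciInf_le hgb θ
    nlinarith

theorem isClose_average {Ω : Type*} [Nonempty Ω] (m : ℕ) (f : Fin m → Ω → ℝ)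
    (g : Ω → ℝ) (ε δ : ℝ) (hε : 0 ≤ ε) (hδ : 0 ≤ δ)
    (hfb : ∀ j, BddBelow (Set.range (f j))) (hgb : BddBelow (Set.range g))
    (hclose : ∀ j, IsClose (f j) g ε δ)
    (w : Fin m → ℝ) (hw : ∀ j, w j ∈ Set.Icc (0:ℝ) 1) (hsum : ∑ j, w j = 1) :
    IsClose (fun θ => ∑ j, w j * f j θ) g ε ((Real.exp ε + 1) * δ) := by
  have hw0 : ∀ j, 0 ≤ w j := fun j => (hw j).1
  set A : Fin m → ℝ := fun j => ⨅ θ' : Ω, f j θ' with hAdef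
  have hA : ∀ j θ, A j ≤ f j θ := fun j θ => ciInf_le (hfb j) θ
  apply isClose_aux (fun θ => ∑ j, w j * f j θ) g ε δ (∑ j, w j * A j) hδ hgb
  · intro θ
    exact Finset.sum_le_sum fun j _ => mul_le_mul_of_nonneg_left (hA j θ) (hw0 j)
  · intro θ
    calc g θ - (⨅ θ' : Ω, g θ') = ∑ j, w j * (g θ - (⨅ θ' : Ω, g θ')) := by
          rw [← Finset.sum_mul, hsum, one_mul]
      _ ≤ ∑ j, w j * (Real.exp ε * (f j θ - A j + δ)) :=
          Finset.sum_le_sum fun j _ => mul_le_mul_of_nonneg_left ((hclose j θ).1) (hw0 j)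
      _ = Real.exp ε * ((∑ j, w j * f j θ) - (∑ j, w j * A j) + δ) := by
          have h1 : ∑ j, w j * (Real.exp ε * (f j θ - A j + δ))
              = Real.exp ε * ∑ j, (w j * f j θ - w j * A j + w j * δ) := by
            rw [Finset.mul_sum]; congr 1; ext j; ring
          rw [h1, Finset.sum_add_distrib, Finset.sum_sub_distrib, ← Finset.sum_mul, hsum,
            one_mul]
  · intro θ
    calc (∑ j, w j * f j θ) - (∑ j, w j * A j) = ∑ j, w j * (f j θ - A j) := by
          rw [← Finset.sum_sub_distrib]; congr 1; ext j; ring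
      _ ≤ ∑ j, w j * (Real.exp ε * (g θ - (⨅ θ' : Ω, g θ') + δ)) :=
          Finset.sum_le_sum fun j _ => mul_le_mul_of_nonneg_left ((hclose j θ).2) (hw0 j)
      _ = Real.exp ε * (g θ - (⨅ θ' : Ω, g θ') + δ) := by
          rw [← Finset.sum_mul, hsum, one_mul]
end

section
/- Let Ω ⊆ ℝ^d be convex with diameter M < ∞, and let f, g : Ω → ℝ be differentiable with g lower bounded. If D₁ = sup_{θ∈Ω} ‖∇f(θ) - ∇g(θ)‖₂ < ∞, then f and g are (0, 2MD₁)-close. -/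
/-- `f` and `g` are `(ε,δ)`-close on the set `Ω`. -/
def IsCloseOn {α : Type*} (f g : α → ℝ) (Ω : Set α) (ε δ : ℝ) : Prop :=
  ∀ θ ∈ Ω, g θ - sInf (g '' Ω) ≤ Real.exp ε * ((f θ - sInf (f '' Ω)) + δ) ∧
    f θ - sInf (f '' Ω) ≤ Real.exp ε * ((g θ - sInf (g '' Ω)) + δ)

theorem isCloseOn_of_gradient_sup {d : ℕ} (Ω : Set (EuclideanSpace ℝ (Fin d)))
    (hΩ : Convex ℝ Ω) (hne : Ω.Nonempty) (M : ℝ)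
    (hdiam : ∀ x ∈ Ω, ∀ y ∈ Ω, ‖x - y‖ ≤ M)
    (f g : EuclideanSpace ℝ (Fin d) → ℝ)
    (hf : ∀ θ ∈ Ω, DifferentiableAt ℝ f θ)
    (hg : ∀ θ ∈ Ω, DifferentiableAt ℝ g θ)
    (hgb : BddBelow (g '' Ω)) (D₁ : ℝ)
    (hD : ∀ θ ∈ Ω, ‖gradient f θ - gradient g θ‖ ≤ D₁) :
    IsCloseOn f g Ω 0 (2 * M * D₁) := by
  set h : EuclideanSpace ℝ (Fin d) → ℝ := fun x => f x - g x with hh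
  have hdh : ∀ θ ∈ Ω, DifferentiableAt ℝ h θ := fun θ hθ => (hf θ hθ).sub (hg θ hθ)
  have hbound : ∀ θ ∈ Ω, ‖fderiv ℝ h θ‖ ≤ D₁ := by
    intro θ hθ
    have : fderiv ℝ h θ = fderiv ℝ f θ - fderiv ℝ g θ := fderiv_sub (hf θ hθ) (hg θ hθ)
    rw [this]
    have := hD θ hθ
    unfold gradient at this
    rwa [← map_sub, (InnerProductSpace.toDual ℝ (EuclideanSpace ℝ (Fin d))).symm.norm_map]
      at this
  -- key: for x, y in Ω, h x - h y ≤ M * D₁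
  have key : ∀ x ∈ Ω, ∀ y ∈ Ω, h x - h y ≤ M * D₁ := by
    intro x hx y hy
    have := hΩ.norm_image_sub_le_of_norm_fderiv_le hdh hbound hy hx
    have hle : h x - h y ≤ D₁ * ‖x - y‖ := le_trans (le_abs_self _) this
    have hD₁ : 0 ≤ D₁ := le_trans (norm_nonneg _) (hD x hx)
    have := hdiam x hx y hy
    nlinarith [norm_nonneg (x - y)]
  have hMD : 0 ≤ M * D₁ := by
    obtain ⟨z, hz⟩ := hne
    have hD₁ : 0 ≤ D₁ := le_trans (norm_nonneg _) (hD z hz)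
    have hM : 0 ≤ M := le_trans (norm_nonneg (z - z)) (hdiam z hz z hz)
    exact mul_nonneg hM hD₁
  obtain ⟨θ₀, hθ₀⟩ := hne
  -- f is bounded below on Ω
  have hfb : BddBelow (f '' Ω) := by
    obtain ⟨c, hc⟩ := hgb
    refine ⟨c + (h θ₀ - M * D₁), ?_⟩
    rintro _ ⟨y, hy, rfl⟩
    have h1 : c ≤ g y := hc ⟨y, hy, rfl⟩
    have h2 : h θ₀ - h y ≤ M * D₁ := key θ₀ hθ₀ y hy
    have : f y = g y + h y := by simp [hh]
    linarith
  intro θ hθ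
  have hgθ : sInf (g '' Ω) ≤ g θ := csInf_le hgb ⟨θ, hθ, rfl⟩
  have hfθ : sInf (f '' Ω) ≤ f θ := csInf_le hfb ⟨θ, hθ, rfl⟩
  -- sInf f ≥ sInf g + h θ - M D₁ , and sInf g ≥ sInf f - h θ - M D₁
  have hIf : sInf (g '' Ω) + (h θ - M * D₁) ≤ sInf (f '' Ω) := by
    apply le_csInf (Set.Nonempty.image f ⟨θ₀, hθ₀⟩)
    rintro _ ⟨y, hy, rfl⟩
    have h1 : sInf (g '' Ω) ≤ g y := csInf_le hgb ⟨y, hy, rfl⟩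
    have h2 : h θ - h y ≤ M * D₁ := key θ hθ y hy
    have : f y = g y + h y := by simp [hh]
    linarith
  have hIg : sInf (f '' Ω) - (h θ + M * D₁) ≤ sInf (g '' Ω) := by
    apply le_csInf (Set.Nonempty.image g ⟨θ₀, hθ₀⟩)
    rintro _ ⟨y, hy, rfl⟩
    have h1 : sInf (f '' Ω) ≤ f y := csInf_le hfb ⟨y, hy, rfl⟩
    have h2 : h y - h θ ≤ M * D₁ := key y hy θ hθ
    have : f y = g y + h y := by simp [hh]
    linarith
  have hθh : g θ = f θ - h θ := by simp [hh]
  constructor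
  · rw [Real.exp_zero, one_mul]
    linarith
  · rw [Real.exp_zero, one_mul]
    linarith
end

section
/- Let Ω ⊆ ℝ^d be convex and f, g : Ω → ℝ twice differentiable with ρI ⪯ ∇²f ⪯ LI and ρI ⪯ ∇²g ⪯ LI on Ω for some 0 < ρ ≤ L < ∞. Suppose f attains its minimum at an interior point θ*_f of Ω and g attains its minimum at an interior point θ*_g of Ω. Then f and g are (log(2L/ρ), (ρ/2)‖θ*_f - θ*_g‖₂²)-close. -/
open Set

/-- `m I ⪯ ∇² f ⪯ M I` on `Ω`. -/
def HessianBoundedOn {E : Type*} [NormedAddCommGroup E] [NormedSpace ℝ E]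
    (f : E → ℝ) (Ω : Set E) (m M : ℝ) : Prop :=
  ∀ θ ∈ Ω, ∀ v : E, m * ‖v‖ ^ 2 ≤ iteratedFDeriv ℝ 2 f θ ![v, v] ∧
    iteratedFDeriv ℝ 2 f θ ![v, v] ≤ M * ‖v‖ ^ 2

theorem IsMinOn.csInf_image_eq {α β : Type*} [ConditionallyCompleteLattice β] {f : α → β}
    {s : Set α} {a : α} (hmin : IsMinOn f s a) (ha : a ∈ s) : sInf (f '' s) = f a :=
  IsLeast.csInf_eq ⟨mem_image_of_mem f ha, forall_mem_image.2 fun _ hx => hmin hx⟩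

section SecondOrderTaylor

variable {φ φ' φ'' : ℝ → ℝ} {a b : ℝ}

theorem quadratic_le_of_le_second_deriv {m : ℝ} (hab : a ≤ b)
    (hφ : ∀ t ∈ Icc a b, HasDerivAt φ (φ' t) t) (hφ' : ∀ t ∈ Icc a b, HasDerivAt φ' (φ'' t) t)
    (hm : ∀ t ∈ Ico a b, m ≤ φ'' t) :
    φ a + φ' a * (b - a) + m / 2 * (b - a) ^ 2 ≤ φ b := by
  have hshift (t : ℝ) : HasDerivAt (fun s => s - a) 1 t := (hasDerivAt_id' t).sub_const a
  have hslope : ∀ t ∈ Icc a b, φ' a + m * (t - a) ≤ φ' t :=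
    image_le_of_deriv_right_le_deriv_boundary (f := fun t => φ' a + m * (t - a))
      (f' := fun _ => m) (by fun_prop)
      (fun t _ => (((hshift t).const_mul m).const_add (φ' a)).congr_deriv (mul_one m)
        |>.hasDerivWithinAt)
      (by simp) (fun t ht => (hφ' t ht).continuousAt.continuousWithinAt)
      (fun t ht => (hφ' t (Ico_subset_Icc_self ht)).hasDerivWithinAt) hm
  exact image_le_of_deriv_right_le_deriv_boundary
    (f := fun t => φ a + φ' a * (t - a) + m / 2 * (t - a) ^ 2) (f' := fun t => φ' a + m * (t - a))
    (by fun_prop)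
    (fun t _ => ((((hshift t).const_mul (φ' a)).const_add (φ a)).add
      (((hshift t).pow 2).const_mul (m / 2))).congr_deriv (by ring) |>.hasDerivWithinAt)
    (by simp) (fun t ht => (hφ t ht).continuousAt.continuousWithinAt)
    (fun t ht => (hφ t (Ico_subset_Icc_self ht)).hasDerivWithinAt)
    (fun t ht => hslope t (Ico_subset_Icc_self ht)) (right_mem_Icc.2 hab)

theorem le_quadratic_of_second_deriv_le {M : ℝ} (hab : a ≤ b)
    (hφ : ∀ t ∈ Icc a b, HasDerivAt φ (φ' t) t) (hφ' : ∀ t ∈ Icc a b, HasDerivAt φ' (φ'' t) t)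
    (hM : ∀ t ∈ Ico a b, φ'' t ≤ M) :
    φ b ≤ φ a + φ' a * (b - a) + M / 2 * (b - a) ^ 2 := by
  have := quadratic_le_of_le_second_deriv (φ := fun t => -φ t) (φ' := fun t => -φ' t)
    (φ'' := fun t => -φ'' t) (m := -M) hab (fun t ht => (hφ t ht).neg) (fun t ht => (hφ' t ht).neg)
    (fun t ht => neg_le_neg (hM t ht))
  linarith

end SecondOrderTaylor

section LineRestriction

variable {E F : Type*} [NormedAddCommGroup E] [NormedSpace ℝ E]
  [NormedAddCommGroup F] [NormedSpace ℝ F] {f : E → F} {x v : E} {t : ℝ}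

theorem hasDerivAt_comp_add_smul (hf : DifferentiableAt ℝ f (x + t • v)) :
    HasDerivAt (fun s : ℝ => f (x + s • v)) (fderiv ℝ f (x + t • v) v) t := by
  have hline : HasDerivAt (fun s : ℝ => x + s • v) v t := by
    simpa using ((hasDerivAt_id t).smul_const v).const_add x
  exact hf.hasFDerivAt.comp_hasDerivAt t hline

theorem hasDerivAt_fderiv_comp_add_smul (hf : ContDiff ℝ 2 f) :
    HasDerivAt (fun s : ℝ => fderiv ℝ f (x + s • v) v)
      (iteratedFDeriv ℝ 2 f (x + t • v) ![v, v]) t := by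
  have hf' : Differentiable ℝ (fderiv ℝ f) :=
    (hf.fderiv_right (m := 1) (by norm_num)).differentiable (by norm_num)
  simpa [iteratedFDeriv_two_apply] using
    (hasDerivAt_comp_add_smul (hf' (x + t • v))).clm_apply (hasDerivAt_const t v)

end LineRestriction

section HessianBounds

variable {E : Type*} [NormedAddCommGroup E] [NormedSpace ℝ E] {f : E → ℝ} {Ω : Set E}
  {m M : ℝ} {x y : E}

theorem HessianBoundedOn.taylor_bounds (h : HessianBoundedOn f Ω m M) (hΩ : Convex ℝ Ω)
    (hf : ContDiff ℝ 2 f) (hx : x ∈ Ω) (hy : y ∈ Ω) :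
    m / 2 * ‖y - x‖ ^ 2 ≤ f y - f x - fderiv ℝ f x (y - x) ∧
      f y - f x - fderiv ℝ f x (y - x) ≤ M / 2 * ‖y - x‖ ^ 2 := by
  have hφ : ∀ t ∈ Icc (0 : ℝ) 1, HasDerivAt (fun s : ℝ => f (x + s • (y - x)))
      (fderiv ℝ f (x + t • (y - x)) (y - x)) t :=
    fun t _ => hasDerivAt_comp_add_smul (hf.differentiable (by norm_num) _)
  have hφ' : ∀ t ∈ Icc (0 : ℝ) 1, HasDerivAt (fun s : ℝ => fderiv ℝ f (x + s • (y - x)) (y - x))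
      (iteratedFDeriv ℝ 2 f (x + t • (y - x)) ![y - x, y - x]) t :=
    fun t _ => hasDerivAt_fderiv_comp_add_smul hf
  have hess := fun t (ht : t ∈ Ico (0 : ℝ) 1) =>
    h _ (hΩ.add_smul_sub_mem hx hy (Ico_subset_Icc_self ht)) (y - x)
  have hlow := quadratic_le_of_le_second_deriv zero_le_one hφ hφ' fun t ht => (hess t ht).1
  have hup := le_quadratic_of_second_deriv_le zero_le_one hφ hφ' fun t ht => (hess t ht).2
  simp only [zero_smul, add_zero, one_smul, add_sub_cancel, sub_zero, one_pow, mul_one] at hlow hup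
  constructor <;> linarith

theorem IsMinOn.quadratic_growth (hmin : IsMinOn f Ω x) (hx : x ∈ interior Ω)
    (h : HessianBoundedOn f Ω m M) (hΩ : Convex ℝ Ω) (hf : ContDiff ℝ 2 f) (hy : y ∈ Ω) :
    m / 2 * ‖y - x‖ ^ 2 ≤ f y - f x ∧ f y - f x ≤ M / 2 * ‖y - x‖ ^ 2 := by
  have hcrit := (hmin.isLocalMin (mem_interior_iff_mem_nhds.mp hx)).fderiv_eq_zero
  simpa [hcrit] using h.taylor_bounds hΩ hf (interior_subset hx) hy

end HessianBounds

theorem le_mul_add_of_quadratic_bounds {ρ L a b c F G : ℝ} (hρ : 0 < ρ) (hL : 0 ≤ L)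
    (hb : 0 ≤ b) (hbac : b ≤ a + c) (hG : G ≤ L / 2 * b ^ 2) (hF : ρ / 2 * a ^ 2 ≤ F) :
    G ≤ 2 * L / ρ * (F + ρ / 2 * c ^ 2) := by
  have hsq : b ^ 2 ≤ 2 * (a ^ 2 + c ^ 2) := by nlinarith [sq_nonneg (a - c)]
  calc G ≤ L / 2 * b ^ 2 := hG
    _ ≤ L * (a ^ 2 + c ^ 2) := by nlinarith
    _ = 2 * L / ρ * (ρ / 2 * a ^ 2 + ρ / 2 * c ^ 2) := by field_simp
    _ ≤ 2 * L / ρ * (F + ρ / 2 * c ^ 2) := by gcongr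

theorem isCloseOn_of_strongly_convex {d : ℕ}
    (Ω : Set (EuclideanSpace ℝ (Fin d))) (hΩ : Convex ℝ Ω)
    (f g : EuclideanSpace ℝ (Fin d) → ℝ)
    (hf : ContDiff ℝ 2 f) (hg : ContDiff ℝ 2 g)
    (ρ L : ℝ) (hρ : 0 < ρ) (hρL : ρ ≤ L)
    (hessf : ∀ θ ∈ Ω, ∀ v : EuclideanSpace ℝ (Fin d),
      ρ * ‖v‖ ^ 2 ≤ iteratedFDeriv ℝ 2 f θ ![v, v] ∧
        iteratedFDeriv ℝ 2 f θ ![v, v] ≤ L * ‖v‖ ^ 2)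
    (hessg : ∀ θ ∈ Ω, ∀ v : EuclideanSpace ℝ (Fin d),
      ρ * ‖v‖ ^ 2 ≤ iteratedFDeriv ℝ 2 g θ ![v, v] ∧
        iteratedFDeriv ℝ 2 g θ ![v, v] ≤ L * ‖v‖ ^ 2)
    (θf θg : EuclideanSpace ℝ (Fin d))
    (hθf : θf ∈ interior Ω) (hθg : θg ∈ interior Ω)
    (hminf : IsMinOn f Ω θf) (hming : IsMinOn g Ω θg) :
    IsCloseOn f g Ω (Real.log (2 * L / ρ)) (ρ / 2 * ‖θf - θg‖ ^ 2) := by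
  have hL : 0 < L := hρ.trans_le hρL
  intro θ hθ
  rw [hminf.csInf_image_eq (interior_subset hθf), hming.csInf_image_eq (interior_subset hθg),
    Real.exp_log (by positivity)]
  obtain ⟨hf_low, hf_up⟩ := hminf.quadratic_growth hθf hessf hΩ hf hθ
  obtain ⟨hg_low, hg_up⟩ := hming.quadratic_growth hθg hessg hΩ hg hθ
  have hdist_g : ‖θ - θg‖ ≤ ‖θ - θf‖ + ‖θf - θg‖ := norm_sub_le_norm_sub_add_norm_sub θ θf θg
  have hdist_f : ‖θ - θf‖ ≤ ‖θ - θg‖ + ‖θf - θg‖ := by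
    simpa [norm_sub_rev θg θf] using norm_sub_le_norm_sub_add_norm_sub θ θg θf
  exact ⟨le_mul_add_of_quadratic_bounds hρ hL.le (norm_nonneg _) hdist_g hg_up hf_low,
    le_mul_add_of_quadratic_bounds hρ hL.le (norm_nonneg _) hdist_f hf_up hg_low⟩
end

section
/- Given a sequence θ*₁,…,θ*_{N-1} in ℝ^d with total variation V = ∑_{n=1}^{N-2} ‖θ*_{n+1} - θ*_n‖₂, and a constant κ > 0, there exist indices 0 = N₀ < N₁ < ⋯ < N_J = N-1 such that max_{N_{j-1} < i,k ≤ N_j} ‖θ*_i - θ*_k‖₂ ≤ κ / √(N_j - N_{j-1}) for all j ∈ [J], and J ≤ 1 + (2/κ²)^{1/3} · (N-1)^{1/3} · V^{2/3}. -/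
/-!
Cut greedily: extend each segment as far as its internal variation stays below
`κ / √length`; this gives the pairwise bound. A segment of length `a` other than the last one
cannot be extended, so its variation `b` including the outgoing edge exceeds
`κ / √(a + 1) ≥ κ / √(2a)`, i.e. `1 ≤ (2 / κ²) a b²`. Taking cube roots and summing, Hölder's
inequality with exponents `3` and `3/2` bounds the number of these segments by
`(2 / κ²)^(1/3) (∑ a)^(1/3) (∑ b)^(2/3) ≤ (2 / κ²)^(1/3) (N - 1)^(1/3) V^(2/3)`.
-/

open Finset

theorem exists_greedy_partition (P : ℕ → ℕ → Prop) (hP : ∀ s, P s (s + 1)) {s L : ℕ}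
    (hsL : s ≤ L) :
    ∃ (J : ℕ) (Ns : ℕ → ℕ), Ns 0 = s ∧ Ns J = L ∧
      ∀ j < J, Ns j < Ns (j + 1) ∧ Ns j < L ∧ P (Ns j) (Ns (j + 1)) ∧
        ∀ n, Ns (j + 1) < n → n ≤ L → ¬ P (Ns j) n := by
  classical
  induction h : L - s using Nat.strong_induction_on generalizing s with
  | _ k ih =>
  rcases hsL.eq_or_lt with rfl | hsL
  · exact ⟨0, fun _ => s, rfl, rfl, by simp⟩
  set n := Nat.findGreatest (fun n => s < n ∧ P s n) L
  have hn : s < n ∧ P s n :=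
    Nat.findGreatest_spec (P := fun n => s < n ∧ P s n) hsL ⟨s.lt_succ_self, hP s⟩
  obtain ⟨J, Ns, h0, hJ, hseg⟩ := ih (L - n) (by omega) (Nat.findGreatest_le L) rfl
  refine ⟨J + 1, fun | 0 => s | j + 1 => Ns j, rfl, hJ, ?_⟩
  rintro (_ | j) hj
  · show s < Ns 0 ∧ s < L ∧ P s (Ns 0) ∧ ∀ m, Ns 0 < m → m ≤ L → ¬ P s m
    rw [h0]
    exact ⟨hn.1, hsL, hn.2, fun m hm hmL hPm =>
      Nat.findGreatest_is_greatest hm hmL ⟨by omega, hPm⟩⟩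
  · exact hseg j (by omega)

theorem norm_sub_le_sum_Ico_norm_sub {E : Type*} [SeminormedAddCommGroup E] (f : ℕ → E)
    {a b i k : ℕ} (hi : i ∈ Icc a b) (hk : k ∈ Icc a b) :
    ‖f i - f k‖ ≤ ∑ m ∈ Ico a b, ‖f (m + 1) - f m‖ := by
  wlog hik : i ≤ k generalizing i k
  · rw [norm_sub_rev]
    exact this hk hi (by omega)
  rw [mem_Icc] at hi hk
  calc ‖f i - f k‖ = dist (f i) (f k) := (dist_eq_norm _ _).symm
    _ ≤ ∑ m ∈ Ico i k, dist (f m) (f (m + 1)) := dist_le_Ico_sum_dist f hik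
    _ ≤ ∑ m ∈ Ico a b, dist (f m) (f (m + 1)) :=
      sum_le_sum_of_subset_of_nonneg (Ico_subset_Ico hi.1 hk.2) fun _ _ _ => dist_nonneg
    _ = ∑ m ∈ Ico a b, ‖f (m + 1) - f m‖ :=
      sum_congr rfl fun m _ => by rw [dist_comm, dist_eq_norm]

theorem sum_range_sum_Ioc_of_monotoneOn {M : Type*} [AddCommMonoid M] (f : ℕ → M)
    {g : ℕ → ℕ} {t : ℕ} (hg : MonotoneOn g (Set.Iic t)) :
    ∑ j ∈ range t, ∑ m ∈ Ioc (g j) (g (j + 1)), f m = ∑ m ∈ Ioc (g 0) (g t), f m := by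
  induction t with
  | zero => simp
  | succ t ih =>
    rw [sum_range_succ, ih (hg.mono (Set.Iic_subset_Iic.2 t.le_succ)), sum_Ioc_consecutive]
    · exact hg (by simp) (by simp) t.zero_le
    · exact hg (by simp) (by simp) t.le_succ

theorem card_le_of_one_le_mul_mul_sq {ι : Type*} (s : Finset ι) {K : ℝ} (hK : 0 ≤ K)
    {a b : ι → ℝ} (ha : ∀ i ∈ s, 0 ≤ a i) (hb : ∀ i ∈ s, 0 ≤ b i)
    (h : ∀ i ∈ s, 1 ≤ K * a i * b i ^ 2) :
    (#s : ℝ) ≤ K ^ ((1 : ℝ) / 3) * (∑ i ∈ s, a i) ^ ((1 : ℝ) / 3) *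
      (∑ i ∈ s, b i) ^ ((2 : ℝ) / 3) := by
  have holder : ∑ i ∈ s, a i ^ ((1 : ℝ) / 3) * b i ^ ((2 : ℝ) / 3) ≤
      (∑ i ∈ s, a i) ^ ((1 : ℝ) / 3) * (∑ i ∈ s, b i) ^ ((2 : ℝ) / 3) := by
    have H := Real.inner_le_Lp_mul_Lq_of_nonneg s (Real.holderConjugate_iff.2 ⟨by norm_num,
      by norm_num⟩ : Real.HolderConjugate 3 (3 / 2))
      (fun i hi => Real.rpow_nonneg (ha i hi) ((1 : ℝ) / 3))
      (fun i hi => Real.rpow_nonneg (hb i hi) ((2 : ℝ) / 3))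
    convert H using 3 <;> norm_num
    · exact sum_congr rfl fun i hi => by
        rw [← Real.rpow_mul_natCast (ha i hi)]; norm_num
    · exact sum_congr rfl fun i hi => by
        rw [← Real.rpow_mul (hb i hi)]; norm_num
  calc (#s : ℝ) = ∑ i ∈ s, (1 : ℝ) := by simp
    _ ≤ ∑ i ∈ s, (K * a i * b i ^ 2) ^ ((1 : ℝ) / 3) :=
      sum_le_sum fun i hi => Real.one_le_rpow (h i hi) (by norm_num)
    _ = K ^ ((1 : ℝ) / 3) * ∑ i ∈ s, a i ^ ((1 : ℝ) / 3) * b i ^ ((2 : ℝ) / 3) := by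
      rw [mul_sum]
      refine sum_congr rfl fun i hi => ?_
      rw [Real.mul_rpow (mul_nonneg hK (ha i hi)) (sq_nonneg _), Real.mul_rpow hK (ha i hi),
        ← Real.rpow_natCast, ← Real.rpow_mul (hb i hi)]
      norm_num [mul_assoc]
    _ ≤ _ := by
      rw [mul_assoc]
      exact mul_le_mul_of_nonneg_left holder (by positivity)

theorem one_le_two_div_sq_mul_mul_sq {κ a b : ℝ} (hκ : 0 < κ) (ha : 1 ≤ a)
    (h : κ / √(a + 1) < b) : 1 ≤ 2 / κ ^ 2 * a * b ^ 2 := by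
  have hκb : κ < b * √(a + 1) := (div_lt_iff₀ (by positivity)).1 h
  have hsq : κ ^ 2 < b ^ 2 * (a + 1) := by
    calc κ ^ 2 < (b * √(a + 1)) ^ 2 := pow_lt_pow_left₀ hκb hκ.le two_ne_zero
      _ = b ^ 2 * (a + 1) := by rw [mul_pow, Real.sq_sqrt (by linarith)]
  rw [mul_assoc, div_mul_eq_mul_div, one_le_div (by positivity)]
  nlinarith [sq_nonneg b]

theorem le_of_forall_div_sqrt_lt_sum_Ioc {κ : ℝ} (hκ : 0 < κ) {w : ℕ → ℝ} (hw : ∀ m, 0 ≤ w m)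
    {Ns : ℕ → ℕ} {t L : ℕ} (h0 : Ns 0 = 0) (hstep : ∀ j < t, Ns j < Ns (j + 1)) (hL : Ns t ≤ L)
    (hmax : ∀ j < t,
      κ / √((Ns (j + 1) : ℝ) - Ns j + 1) < ∑ m ∈ Ioc (Ns j) (Ns (j + 1)), w m) :
    (t : ℝ) ≤ (2 / κ ^ 2) ^ ((1 : ℝ) / 3) * (L : ℝ) ^ ((1 : ℝ) / 3) *
      (∑ m ∈ Icc 1 L, w m) ^ ((2 : ℝ) / 3) := by
  have hlen : ∀ j ∈ range t, 1 ≤ (Ns (j + 1) : ℝ) - Ns j := fun j hj => by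
    have : (Ns j : ℝ) + 1 ≤ Ns (j + 1) := by exact_mod_cast hstep j (mem_range.1 hj)
    linarith
  have hA : ∑ j ∈ range t, ((Ns (j + 1) : ℝ) - Ns j) = Ns t := by
    rw [sum_range_sub (fun j => (Ns j : ℝ)), h0, Nat.cast_zero, sub_zero]
  have hB : ∑ j ∈ range t, ∑ m ∈ Ioc (Ns j) (Ns (j + 1)), w m ≤ ∑ m ∈ Icc 1 L, w m := by
    have hmono : MonotoneOn Ns (Set.Iic t) :=
      (strictMonoOn_Iic_of_lt_succ hstep).monotoneOn
    rw [sum_range_sum_Ioc_of_monotoneOn w hmono, h0]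
    exact sum_le_sum_of_subset_of_nonneg
      (fun m hm => by simp only [mem_Ioc, mem_Icc] at hm ⊢; omega) fun m _ _ => hw m
  have hcard := card_le_of_one_le_mul_mul_sq (range t) (by positivity)
    (fun j hj => zero_le_one.trans (hlen j hj)) (fun j _ => sum_nonneg fun m _ => hw m)
    fun j hj => one_le_two_div_sq_mul_mul_sq hκ (hlen j hj) (hmax j (mem_range.1 hj))
  rw [card_range, hA] at hcard
  have hB0 : 0 ≤ ∑ j ∈ range t, ∑ m ∈ Ioc (Ns j) (Ns (j + 1)), w m :=
    sum_nonneg fun j _ => sum_nonneg fun m _ => hw m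
  refine hcard.trans ?_
  gcongr

theorem tv_to_segmentation {d : ℕ} (N : ℕ) (hN : 2 ≤ N)
    (θ : ℕ → EuclideanSpace ℝ (Fin d)) (κ : ℝ) (hκ : 0 < κ) :
    ∃ (J : ℕ) (Ns : ℕ → ℕ), 0 < J ∧ Ns 0 = 0 ∧ Ns J = N - 1 ∧
      (∀ j < J, Ns j < Ns (j + 1)) ∧
      (∀ j < J, ∀ i k : ℕ, Ns j < i → i ≤ Ns (j + 1) → Ns j < k → k ≤ Ns (j + 1) →
        ‖θ i - θ k‖ ≤ κ / Real.sqrt ((Ns (j + 1) : ℝ) - (Ns j : ℝ))) ∧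
      (J : ℝ) ≤ 1 + (2 / κ ^ 2) ^ ((1 : ℝ) / 3) * ((N : ℝ) - 1) ^ ((1 : ℝ) / 3) *
        (∑ n ∈ Finset.Icc 1 (N - 2), ‖θ (n + 1) - θ n‖) ^ ((2 : ℝ) / 3) := by
  obtain ⟨J, Ns, h0, hJ, hseg⟩ := exists_greedy_partition
    (fun s n => ∑ m ∈ Ico (s + 1) n, ‖θ (m + 1) - θ m‖ ≤ κ / √((n : ℝ) - s))
    (fun s => by simpa using hκ.le) (Nat.zero_le (N - 1))
  have hJ0 : 0 < J := Nat.pos_of_ne_zero fun hJ0 => by subst hJ0; omega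
  refine ⟨J, Ns, hJ0, h0, hJ, fun j hj => (hseg j hj).1, fun j hj i k hi hi' hk hk' =>
    (norm_sub_le_sum_Ico_norm_sub θ (mem_Icc.2 ⟨hi, hi'⟩) (mem_Icc.2 ⟨hk, hk'⟩)).trans
      (hseg j hj).2.2.1, ?_⟩
  have hcount := le_of_forall_div_sqrt_lt_sum_Ioc hκ (fun m => norm_nonneg (θ (m + 1) - θ m)) h0
    (t := J - 1) (L := N - 2) (fun j hj => (hseg j (by omega)).1)
    (by have := (hseg (J - 1) (by omega)).2.1; omega) fun j hj => by
      have hnext := (hseg j (by omega)).2.2.2 (Ns (j + 1) + 1) (by omega)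
        (hseg (j + 1) (by omega)).2.1
      rwa [not_le, Ico_add_one_add_one_eq_Ioc, Nat.cast_succ, add_sub_right_comm] at hnext
  have hN2 : ((N - 2 : ℕ) : ℝ) ≤ N - 1 := by
    rw [Nat.cast_sub hN, Nat.cast_two]
    linarith
  calc (J : ℝ) = 1 + (J - 1 : ℕ) := by rw [Nat.cast_sub hJ0, Nat.cast_one]; ring
    _ ≤ _ := by gcongr; exact hcount.trans (by gcongr)
end

section
/- Let g : Ω → ℝ be ρ-strongly convex and twice differentiable on a convex set Ω ⊆ ℝ^d with a minimizer θ*_g such that B(θ*_g, r) ⊆ Ω, and let f be differentiable with sup_{θ∈Ω} ‖∇f(θ) - ∇g(θ)‖₂ = D₁ ≤ ρr. Then for every θ ∈ Ω, f(θ) - f(θ*_g) ≥ (ρ/2)‖θ - θ*_g‖₂ (‖θ - θ*_g‖₂ - 2D₁/ρ); in particular f(θ) > f(θ*_g) whenever ‖θ - θ*_g‖₂ > 2D₁/ρ. -/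
/-!
Restricting `g` to the segment from `θg` to `θ` and integrating the Hessian bound twice gives the
quadratic growth `g θg + ρ/2 ‖θ - θg‖² ≤ g θ`; the first-order term drops out because it is
nonnegative at a minimizer over a convex set. By the mean value theorem, `f - g` changes by at
most `D₁ ‖θ - θg‖` between `θg` and `θ`, and subtracting the two estimates gives the bound.
-/

open Set

theorem le_image_of_deriv2_ge {φ φ' φ'' : ℝ → ℝ} {a b m : ℝ}
    (hφ : ∀ t ∈ Icc a b, HasDerivAt φ (φ' t) t) (hφ' : ∀ t ∈ Icc a b, HasDerivAt φ' (φ'' t) t)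
    (hm : ∀ t ∈ Ico a b, m ≤ φ'' t) :
    ∀ t ∈ Icc a b, φ a + φ' a * (t - a) + m / 2 * (t - a) ^ 2 ≤ φ t := by
  have hslope : ∀ t ∈ Icc a b, φ' a + m * (t - a) ≤ φ' t := by
    refine image_le_of_deriv_right_le_deriv_boundary (f' := fun _ => m) (by fun_prop)
      (fun t _ => ?_) (by simp) (fun t ht => (hφ' t ht).continuousAt.continuousWithinAt)
      (fun t ht => (hφ' t (Ico_subset_Icc_self ht)).hasDerivWithinAt) hm
    simpa using (((hasDerivAt_id t).sub_const a).const_mul m).const_add (φ' a) |>.hasDerivWithinAt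
  refine image_le_of_deriv_right_le_deriv_boundary (f' := fun t => φ' a + m * (t - a))
    (by fun_prop) (fun t _ => ?_) (by simp) (fun t ht => (hφ t ht).continuousAt.continuousWithinAt)
    (fun t ht => (hφ t (Ico_subset_Icc_self ht)).hasDerivWithinAt)
    (fun t ht => hslope t (Ico_subset_Icc_self ht))
  have hquad : HasDerivAt (fun s => φ a + φ' a * (s - a) + m / 2 * (s - a) ^ 2)
      (φ' a + m * (t - a)) t := by
    have := ((((hasDerivAt_id t).sub_const a).const_mul (φ' a)).const_add (φ a)).add
      ((((hasDerivAt_id t).sub_const a).pow 2).const_mul (m / 2))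
    exact this.congr_deriv (by
      simp only [mul_one, Nat.cast_ofNat, id_eq, Nat.add_one_sub_one, pow_one, add_right_inj]
      ring)
  exact hquad.hasDerivWithinAt

section Hessian

variable {E : Type*} [NormedAddCommGroup E] [NormedSpace ℝ E]

theorem Convex.add_fderiv_add_mul_sq_le_of_hessian_ge {Ω : Set E} (hΩ : Convex ℝ Ω) {g : E → ℝ}
    (hg : ContDiff ℝ 2 g) {ρ : ℝ}
    (hessg : ∀ θ ∈ Ω, ∀ v : E, ρ * ‖v‖ ^ 2 ≤ iteratedFDeriv ℝ 2 g θ ![v, v])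
    {x y : E} (hx : x ∈ Ω) (hy : y ∈ Ω) :
    g x + fderiv ℝ g x (y - x) + ρ / 2 * ‖y - x‖ ^ 2 ≤ g y := by
  set v := y - x
  set c : ℝ → E := fun t => x + t • v
  have hc : ∀ t, HasDerivAt c v t := fun t =>
    (((hasDerivAt_id t).smul_const v).const_add x).congr_deriv (one_smul ℝ v)
  have hcΩ : ∀ t ∈ Icc (0 : ℝ) 1, c t ∈ Ω := fun t ht => by
    simpa [c, v] using hΩ.add_smul_sub_mem hx hy ht
  have hg1 : Differentiable ℝ g := hg.differentiable (by norm_num)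
  have hg2 : Differentiable ℝ (fderiv ℝ g) :=
    (hg.fderiv_right (m := 1) (by norm_num)).differentiable one_ne_zero
  have hφ : ∀ t, HasDerivAt (g ∘ c) (fderiv ℝ g (c t) v) t := fun t =>
    (hg1 (c t)).hasFDerivAt.comp_hasDerivAt t (hc t)
  have hφ' : ∀ t, HasDerivAt (fun t => fderiv ℝ g (c t) v) (fderiv ℝ (fderiv ℝ g) (c t) v v) t :=
    fun t => ((hg2 (c t)).hasFDerivAt.comp_hasDerivAt t (hc t)).clm_apply (hasDerivAt_const t v)
      |>.congr_deriv (by simp)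
  have hm : ∀ t ∈ Ico (0 : ℝ) 1, ρ * ‖v‖ ^ 2 ≤ fderiv ℝ (fderiv ℝ g) (c t) v v := fun t ht => by
    simpa [iteratedFDeriv_two_apply] using hessg (c t) (hcΩ t (Ico_subset_Icc_self ht)) v
  have htaylor := le_image_of_deriv2_ge (fun t _ => hφ t) (fun t _ => hφ' t) hm 1 (by simp)
  simp only [c, v, one_smul, add_sub_cancel, sub_zero, zero_smul, add_zero, mul_one, one_pow,
    Function.comp_apply] at htaylor
  linarith

theorem IsMinOn.fderiv_sub_nonneg {Ω : Set E} (hΩ : Convex ℝ Ω) {g : E → ℝ} {x y : E}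
    (hmin : IsMinOn g Ω x) (hg : DifferentiableAt ℝ g x) (hx : x ∈ Ω) (hy : y ∈ Ω) :
    0 ≤ fderiv ℝ g x (y - x) :=
  hmin.localize.hasFDerivWithinAt_nonneg hg.hasFDerivAt.hasFDerivWithinAt
    (sub_mem_posTangentConeAt_of_segment_subset (hΩ.segment_subset hx hy))

theorem IsMinOn.add_mul_sq_norm_sub_le_of_hessian_ge {Ω : Set E} (hΩ : Convex ℝ Ω) {g : E → ℝ}
    (hg : ContDiff ℝ 2 g) {ρ : ℝ}
    (hessg : ∀ θ ∈ Ω, ∀ v : E, ρ * ‖v‖ ^ 2 ≤ iteratedFDeriv ℝ 2 g θ ![v, v])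
    {x y : E} (hmin : IsMinOn g Ω x) (hx : x ∈ Ω) (hy : y ∈ Ω) :
    g x + ρ / 2 * ‖y - x‖ ^ 2 ≤ g y := by
  have htaylor := hΩ.add_fderiv_add_mul_sq_le_of_hessian_ge hg hessg hx hy
  have hfirst := hmin.fderiv_sub_nonneg hΩ (hg.differentiable (by norm_num) x) hx hy
  linarith

end Hessian

theorem norm_gradient_sub_gradient {F : Type*} [NormedAddCommGroup F] [InnerProductSpace ℝ F]
    [CompleteSpace F] (f g : F → ℝ) (x : F) :
    ‖gradient f x - gradient g x‖ = ‖fderiv ℝ f x - fderiv ℝ g x‖ := by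
  rw [← toDual_gradient, ← toDual_gradient, ← map_sub, LinearIsometryEquiv.norm_map]

theorem localization_of_minimizers_general {d : ℕ}
    (Ω : Set (EuclideanSpace ℝ (Fin d))) (hΩ : Convex ℝ Ω)
    (g : EuclideanSpace ℝ (Fin d) → ℝ) (hg : ContDiff ℝ 2 g)
    (ρ : ℝ) (hρ : 0 < ρ)
    (hessg : ∀ θ ∈ Ω, ∀ v : EuclideanSpace ℝ (Fin d),
      ρ * ‖v‖ ^ 2 ≤ iteratedFDeriv ℝ 2 g θ ![v, v])
    (θg : EuclideanSpace ℝ (Fin d)) (hθg : θg ∈ Ω) (hming : IsMinOn g Ω θg)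
    (f : EuclideanSpace ℝ (Fin d) → ℝ)
    (hf : ∀ θ ∈ Ω, DifferentiableAt ℝ f θ) (D₁ : ℝ)
    (hD : ∀ θ ∈ Ω, ‖gradient f θ - gradient g θ‖ ≤ D₁) :
    ∀ θ ∈ Ω, ρ / 2 * ‖θ - θg‖ * (‖θ - θg‖ - 2 * D₁ / ρ) ≤ f θ - f θg ∧
      (2 * D₁ / ρ < ‖θ - θg‖ → f θg < f θ) := by
  intro θ hθ
  have hgrowth := hming.add_mul_sq_norm_sub_le_of_hessian_ge hΩ hg hessg hθg hθ
  have hperturb : ‖(f θ - g θ) - (f θg - g θg)‖ ≤ D₁ * ‖θ - θg‖ :=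
    hΩ.norm_image_sub_le_of_norm_hasFDerivWithin_le (f := fun x => f x - g x)
      (fun x hx => ((hf x hx).hasFDerivAt.sub
        (hg.differentiable (by norm_num) x).hasFDerivAt).hasFDerivWithinAt)
      (fun x hx => norm_gradient_sub_gradient f g x ▸ hD x hx) hθg hθ
  have hlower : ρ / 2 * ‖θ - θg‖ * (‖θ - θg‖ - 2 * D₁ / ρ) ≤ f θ - f θg := by
    have hexpand : ρ / 2 * ‖θ - θg‖ * (‖θ - θg‖ - 2 * D₁ / ρ)
        = ρ / 2 * ‖θ - θg‖ ^ 2 - D₁ * ‖θ - θg‖ := by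
      field_simp
    rw [hexpand]
    linarith [(abs_le.1 (Real.norm_eq_abs _ ▸ hperturb)).1]
  refine ⟨hlower, fun hfar => ?_⟩
  have hD₀ : 0 ≤ D₁ := (norm_nonneg _).trans (hD θg hθg)
  have hdist : 0 < ‖θ - θg‖ := lt_of_le_of_lt (by positivity) hfar
  have hpos := mul_pos (mul_pos (half_pos hρ) hdist) (sub_pos.2 hfar)
  linarith

theorem localization_of_minimizers {d : ℕ}
    (Ω : Set (EuclideanSpace ℝ (Fin d))) (hΩ : Convex ℝ Ω)
    (g : EuclideanSpace ℝ (Fin d) → ℝ) (hg : ContDiff ℝ 2 g)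
    (ρ : ℝ) (hρ : 0 < ρ)
    (hessg : ∀ θ ∈ Ω, ∀ v : EuclideanSpace ℝ (Fin d),
      ρ * ‖v‖ ^ 2 ≤ iteratedFDeriv ℝ 2 g θ ![v, v])
    (θg : EuclideanSpace ℝ (Fin d)) (hθg : θg ∈ Ω) (hming : IsMinOn g Ω θg)
    (r : ℝ) (hr : 0 < r) (hball : Metric.closedBall θg r ⊆ Ω)
    (f : EuclideanSpace ℝ (Fin d) → ℝ)
    (hf : ∀ θ ∈ Ω, DifferentiableAt ℝ f θ) (D₁ : ℝ)
    (hD : ∀ θ ∈ Ω, ‖gradient f θ - gradient g θ‖ ≤ D₁) (hD₁ : D₁ ≤ ρ * r) :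
    ∀ θ ∈ Ω, ρ / 2 * ‖θ - θg‖ * (‖θ - θg‖ - 2 * D₁ / ρ) ≤ f θ - f θg ∧
      (2 * D₁ / ρ < ‖θ - θg‖ → f θg < f θ) :=
  localization_of_minimizers_general Ω hΩ g hg ρ hρ hessg θg hθg hming f hf D₁ hD
end
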